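/- arXiv:quant-ph/0312204 — 6 statements merged into one kernel-verified Lean document; each statement's English description precedes it below -/
import Mathlib

section
/- In a quantum system of dimension N ≥ 2, the number of pairwise mutually unbiased orthonormal bases of ℂ^N is at most N+1. -/
/-!
Send a unit vector `a ∈ ℂ^N` to the traceless part `a a* - I / N` of its projector, a vector of the
`N²`-dimensional space of matrices with the Hilbert–Schmidt inner product. For unit vectors
`⟪a a* - I/N, b b* - I/N⟫ = |⟪a, b⟫|² - 1/N`, so the traceless parts coming from two mutually
unbiased bases are orthogonal, and all of them are orthogonal to `I`. The projectors of one basis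
are orthonormal, so its traceless parts span at least `N - 1` dimensions. Hence `1 + M (N - 1) ≤ N²`.
-/

open Module Submodule Set
open scoped InnerProductSpace ComplexConjugate

theorem Submodule.sum_finrank_le_of_pairwise_isOrtho {𝕜 E ι : Type*} [RCLike 𝕜]
    [NormedAddCommGroup E] [InnerProductSpace 𝕜 E] [FiniteDimensional 𝕜 E] [Fintype ι]
    {V : ι → Submodule 𝕜 E} (hV : Pairwise fun i j => V i ⟂ V j) :
    ∑ i, finrank 𝕜 (V i) ≤ finrank 𝕜 E := by
  classical
  have hindep : iSupIndep V := (OrthogonalFamily.of_pairwise hV).independent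
  rw [← Module.finrank_directSum]
  exact LinearMap.finrank_le_finrank_of_injective hindep.dfinsupp_lsum_injective

variable {𝕜 ι κ κ' : Type*} [RCLike 𝕜] [Fintype ι]

/-- The matrix `a a*`, flattened so that the inner product is the Hilbert–Schmidt one
`⟪A, B⟫ = tr (A* B)`. -/
noncomputable def projVec (a : EuclideanSpace 𝕜 ι) : EuclideanSpace 𝕜 (ι × ι) :=
  WithLp.toLp 2 fun p => a p.1 * conj (a p.2)

theorem inner_projVec_projVec (a b : EuclideanSpace 𝕜 ι) :
    ⟪projVec a, projVec b⟫_𝕜 = (‖⟪a, b⟫_𝕜‖ : 𝕜) ^ 2 := by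
  rw [← RCLike.mul_conj]
  simp only [projVec, PiLp.inner_apply, RCLike.inner_apply, map_sum, map_mul,
    RCLike.conj_conj, Fintype.sum_prod_type, Finset.sum_mul_sum]
  refine Finset.sum_congr rfl fun k _ => Finset.sum_congr rfl fun l _ => ?_
  ring

theorem Orthonormal.projVec_comp {b : κ → EuclideanSpace 𝕜 ι} (hb : Orthonormal 𝕜 b) :
    Orthonormal 𝕜 (projVec ∘ b) := by
  classical
  rw [orthonormal_iff_ite] at hb ⊢
  intro i j
  rw [Function.comp_apply, Function.comp_apply, inner_projVec_projVec, hb]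
  split_ifs <;> simp

theorem nonempty_of_norm_eq_one {a : EuclideanSpace 𝕜 ι} (ha : ‖a‖ = 1) : Nonempty ι := by
  by_contra h
  rw [not_nonempty_iff] at h
  simp [Subsingleton.elim a 0] at ha

variable [DecidableEq ι]

variable (𝕜 ι) in
noncomputable def idVec : EuclideanSpace 𝕜 (ι × ι) :=
  WithLp.toLp 2 fun p => if p.1 = p.2 then 1 else 0

noncomputable def tracelessProjVec (a : EuclideanSpace 𝕜 ι) : EuclideanSpace 𝕜 (ι × ι) :=
  projVec a - (Fintype.card ι : 𝕜)⁻¹ • idVec 𝕜 ι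

theorem inner_projVec_idVec (a : EuclideanSpace 𝕜 ι) :
    ⟪projVec a, idVec 𝕜 ι⟫_𝕜 = (‖a‖ : 𝕜) ^ 2 := by
  rw [← inner_self_eq_norm_sq_to_K]
  simp only [projVec, idVec, PiLp.inner_apply, RCLike.inner_apply, Fintype.sum_prod_type]
  simp [mul_comm]

theorem inner_idVec_projVec (a : EuclideanSpace 𝕜 ι) :
    ⟪idVec 𝕜 ι, projVec a⟫_𝕜 = (‖a‖ : 𝕜) ^ 2 := by
  rw [← inner_conj_symm, inner_projVec_idVec]
  simp

theorem inner_idVec_self : ⟪idVec 𝕜 ι, idVec 𝕜 ι⟫_𝕜 = Fintype.card ι := by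
  simp only [idVec, PiLp.inner_apply, RCLike.inner_apply, Fintype.sum_prod_type]
  simp

theorem inner_tracelessProjVec {a b : EuclideanSpace 𝕜 ι} (ha : ‖a‖ = 1) (hb : ‖b‖ = 1) :
    ⟪tracelessProjVec a, tracelessProjVec b⟫_𝕜 =
      (‖⟪a, b⟫_𝕜‖ : 𝕜) ^ 2 - (Fintype.card ι : 𝕜)⁻¹ := by
  simp only [tracelessProjVec, inner_sub_left, inner_sub_right, inner_smul_left, inner_smul_right,
    inner_projVec_projVec, inner_projVec_idVec, inner_idVec_projVec, inner_idVec_self, ha, hb,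
    map_inv₀, map_natCast, RCLike.ofReal_one]
  have := nonempty_of_norm_eq_one ha
  rw [inv_mul_cancel₀ (by simp)]
  ring

theorem inner_idVec_tracelessProjVec {a : EuclideanSpace 𝕜 ι} (ha : ‖a‖ = 1) :
    ⟪idVec 𝕜 ι, tracelessProjVec a⟫_𝕜 = 0 := by
  have := nonempty_of_norm_eq_one ha
  simp only [tracelessProjVec, inner_sub_right, inner_smul_right, inner_idVec_projVec,
    inner_idVec_self, ha]
  simp

theorem idVec_ne_zero [Nonempty ι] : idVec 𝕜 ι ≠ 0 := by
  intro h
  have := inner_idVec_self (𝕜 := 𝕜) (ι := ι)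
  simp [h, eq_comm] at this

theorem projVec_eq_tracelessProjVec_add (a : EuclideanSpace 𝕜 ι) :
    projVec a = tracelessProjVec a + (Fintype.card ι : 𝕜)⁻¹ • idVec 𝕜 ι := by
  simp [tracelessProjVec]

theorem span_projVec_le (b : κ → EuclideanSpace 𝕜 ι) :
    span 𝕜 (range (projVec ∘ b)) ≤ span 𝕜 (range (tracelessProjVec ∘ b)) ⊔ 𝕜 ∙ idVec 𝕜 ι := by
  rw [span_le]
  rintro _ ⟨i, rfl⟩
  rw [Function.comp_apply, projVec_eq_tracelessProjVec_add]
  exact add_mem_sup (subset_span ⟨i, rfl⟩) (smul_mem _ _ (mem_span_singleton_self _))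

theorem Orthonormal.card_le_finrank_span_tracelessProjVec_add_one [Fintype κ]
    {b : κ → EuclideanSpace 𝕜 ι} (hb : Orthonormal 𝕜 b) :
    Fintype.card κ ≤ finrank 𝕜 (span 𝕜 (range (tracelessProjVec ∘ b))) + 1 :=
  calc Fintype.card κ = finrank 𝕜 (span 𝕜 (range (projVec ∘ b))) :=
        (finrank_span_eq_card hb.projVec_comp.linearIndependent).symm
    _ ≤ finrank 𝕜 ↥(span 𝕜 (range (tracelessProjVec ∘ b)) ⊔ 𝕜 ∙ idVec 𝕜 ι) :=
        Submodule.finrank_mono (span_projVec_le b)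
    _ ≤ finrank 𝕜 (span 𝕜 (range (tracelessProjVec ∘ b))) + finrank 𝕜 (𝕜 ∙ idVec 𝕜 ι) :=
        Submodule.finrank_add_le_finrank_add_finrank _ _
    _ ≤ _ := by
        have : finrank 𝕜 (𝕜 ∙ idVec 𝕜 ι) ≤ 1 := (finrank_span_le_card _).trans (by simp)
        omega

theorem span_idVec_isOrtho_span_tracelessProjVec {b : κ → EuclideanSpace 𝕜 ι}
    (hb : ∀ i, ‖b i‖ = 1) : 𝕜 ∙ idVec 𝕜 ι ⟂ span 𝕜 (range (tracelessProjVec ∘ b)) := by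
  rw [isOrtho_span]
  rintro _ rfl _ ⟨i, rfl⟩
  exact inner_idVec_tracelessProjVec (hb i)

theorem span_tracelessProjVec_isOrtho {b : κ → EuclideanSpace 𝕜 ι} {c : κ' → EuclideanSpace 𝕜 ι}
    (hb : ∀ i, ‖b i‖ = 1) (hc : ∀ j, ‖c j‖ = 1)
    (hbc : ∀ i j, ‖⟪b i, c j⟫_𝕜‖ = 1 / √(Fintype.card ι)) :
    span 𝕜 (range (tracelessProjVec ∘ b)) ⟂ span 𝕜 (range (tracelessProjVec ∘ c)) := by
  rw [isOrtho_span]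
  rintro _ ⟨i, rfl⟩ _ ⟨j, rfl⟩
  have hsq : ‖⟪b i, c j⟫_𝕜‖ ^ 2 = (Fintype.card ι : ℝ)⁻¹ := by
    rw [hbc, div_pow, one_pow, Real.sq_sqrt (Nat.cast_nonneg _), one_div]
  rw [Function.comp_apply, Function.comp_apply, inner_tracelessProjVec (hb i) (hc j),
    ← RCLike.ofReal_pow, hsq]
  simp

/-- In dimension `N ≥ 2`, a family of pairwise mutually unbiased orthonormal
bases of `ℂ^N` has at most `N + 1` members. -/
theorem mub_card_le (N M : ℕ) (hN : 2 ≤ N)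
    (B : Fin M → Fin N → EuclideanSpace ℂ (Fin N))
    (horth : ∀ m, Orthonormal ℂ (B m))
    (hmub : ∀ m m' : Fin M, m ≠ m' → ∀ i j,
      ‖(inner ℂ (B m i) (B m' j) : ℂ)‖ = 1 / Real.sqrt N) :
    M ≤ N + 1 := by
  have : Nonempty (Fin N) := ⟨⟨0, by omega⟩⟩
  have hunit (m : Fin M) : ∀ i, ‖B m i‖ = 1 := (horth m).1
  let W : Option (Fin M) → Submodule ℂ (EuclideanSpace ℂ (Fin N × Fin N)) := fun o =>
    o.elim (ℂ ∙ idVec ℂ (Fin N)) fun m => span ℂ (range (tracelessProjVec ∘ B m))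
  have hW : Pairwise fun o o' => W o ⟂ W o' := by
    rintro (_ | m) (_ | m') hne
    · exact absurd rfl hne
    · exact span_idVec_isOrtho_span_tracelessProjVec (hunit m')
    · exact (span_idVec_isOrtho_span_tracelessProjVec (hunit m)).symm
    · refine span_tracelessProjVec_isOrtho (hunit m) (hunit m') ?_
      simpa using hmub m m' (fun h => hne (congrArg some h))
  have hI : finrank ℂ (W none) = 1 := finrank_span_singleton idVec_ne_zero
  have hdim : 1 + ∑ m, finrank ℂ (W (some m)) ≤ N * N := by
    simpa [Fintype.sum_option, hI] using Submodule.sum_finrank_le_of_pairwise_isOrtho hW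
  have hbases : M * N ≤ ∑ m, finrank ℂ (W (some m)) + M :=
    calc M * N = ∑ _m : Fin M, Fintype.card (Fin N) := by simp
      _ ≤ ∑ m, (finrank ℂ (W (some m)) + 1) := Finset.sum_le_sum fun m _ =>
          (horth m).card_le_finrank_span_tracelessProjVec_add_one
      _ = ∑ m, finrank ℂ (W (some m)) + M := by simp [Finset.sum_add_distrib]
  nlinarith
end

section
/- For an odd prime p, the p bases of ℂ^p given by (v_k^{(r)})_l = (1/√p) e^{(2πi/p)(r l² + k l)} for r, k, l ∈ 𝔽_p, together with the standard basis, form a set of p+1 mutually unbiased bases. -/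
/-!
With `ψ` the standard additive character of `𝔽_p`, `v r k` is the normalised chirp
`l ↦ ψ (r l² + k l)`, and `⟪v r k, v r' k'⟫ = p⁻¹ ∑_l ψ ((r' - r) l² + (k' - k) l)`.
For `r = r'` this is a linear character sum, equal to `p` or `0`: each family is orthonormal.
For `r ≠ r'` it is a quadratic Gauss sum, of absolute value `√p` as soon as `2 (r' - r)` is
invertible, i.e. for odd `p`; this gives the overlap `1/√p`.
-/

open scoped Real ComplexConjugate
open Finset

namespace AddChar

variable {R : Type*} [CommRing R] [Fintype R]

/-- Weyl differencing: substituting `x = y + d` turns `|S|²` into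
`∑_d ψ(a d² + b d) ∑_y ψ(2 a d y)`; primitivity of `ψ` kills every inner sum but `d = 0`. -/
theorem norm_sum_quadratic_sq {ψ : AddChar R ℂ} (hψ : ψ.IsPrimitive) {a : R}
    (ha : IsUnit (2 * a)) (b : R) :
    ‖∑ x, ψ (a * x ^ 2 + b * x)‖ ^ 2 = Fintype.card R := by
  classical
  set f : R → R := fun x => a * x ^ 2 + b * x
  change ‖∑ x, ψ (f x)‖ ^ 2 = _
  have hshift : ∀ d y, f (d + y) - f y = f d + y * (2 * a * d) := fun d y => by ring
  suffices h : (∑ x, ψ (f x)) * conj (∑ x, ψ (f x)) = Fintype.card R by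
    exact_mod_cast (Complex.mul_conj' _).symm.trans h
  calc (∑ x, ψ (f x)) * conj (∑ x, ψ (f x))
      = ∑ y, ∑ x, ψ (f x - f y) := by
        simp_rw [map_sum, sum_mul_sum, ← map_neg_eq_conj, ← map_add_eq_mul, sub_eq_add_neg]
        exact sum_comm
    _ = ∑ y, ∑ d, ψ (f d) * ψ (y * (2 * a * d)) := by
        refine sum_congr rfl fun y _ => ?_
        rw [← Equiv.sum_comp (Equiv.addRight y)]
        simp only [Equiv.coe_addRight, hshift, map_add_eq_mul]
    _ = ∑ d, ψ (f d) * ((if d = 0 then Fintype.card R else 0 : ℕ) : ℂ) := by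
        rw [sum_comm]
        simp_rw [← mul_sum, sum_mulShift _ hψ, ha.mul_right_eq_zero]
    _ = Fintype.card R := by simp [f]

end AddChar

namespace QuadraticPhase

variable {R : Type*} [CommRing R] [Fintype R]

noncomputable def vec (ψ : AddChar R ℂ) (r k : R) : EuclideanSpace ℂ R :=
  WithLp.toLp 2 fun l => ((1 / √(Fintype.card R) : ℝ) : ℂ) * ψ (r * l ^ 2 + k * l)

lemma vec_apply (ψ : AddChar R ℂ) (r k l : R) :
    vec ψ r k l = ((1 / √(Fintype.card R) : ℝ) : ℂ) * ψ (r * l ^ 2 + k * l) := rfl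

lemma norm_vec_apply (ψ : AddChar R ℂ) (r k l : R) :
    ‖vec ψ r k l‖ = 1 / √(Fintype.card R) := by
  rw [vec_apply, norm_mul, AddChar.norm_apply, mul_one, Complex.norm_real, Real.norm_of_nonneg]
  positivity

lemma inner_vec (ψ : AddChar R ℂ) (r k r' k' : R) :
    inner ℂ (vec ψ r k) (vec ψ r' k') =
      (Fintype.card R : ℂ)⁻¹ * ∑ l, ψ ((r' - r) * l ^ 2 + (k' - k) * l) := by
  have hc : ((1 / √(Fintype.card R) : ℝ) : ℂ) * ((1 / √(Fintype.card R) : ℝ) : ℂ) =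
      (Fintype.card R : ℂ)⁻¹ := by
    rw [← Complex.ofReal_mul, div_mul_div_comm, one_mul,
      Real.mul_self_sqrt (Nat.cast_nonneg _)]
    push_cast
    ring
  rw [PiLp.inner_apply, mul_sum]
  refine sum_congr rfl fun l _ => ?_
  rw [vec_apply, vec_apply, RCLike.inner_apply', map_mul, Complex.conj_ofReal,
    ← AddChar.map_neg_eq_conj, mul_mul_mul_comm, hc, ← AddChar.map_add_eq_mul]
  ring_nf

theorem orthonormal_vec {ψ : AddChar R ℂ} (hψ : ψ.IsPrimitive) (r : R) :
    Orthonormal ℂ (vec ψ r) := by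
  classical
  rw [orthonormal_iff_ite]
  intro k k'
  have hlin : ∀ l : R, (r - r) * l ^ 2 + (k' - k) * l = l * (k' - k) := fun l => by ring
  simp_rw [inner_vec, hlin, AddChar.sum_mulShift _ hψ, sub_eq_zero, eq_comm (a := k')]
  split_ifs
  · exact inv_mul_cancel₀ (Nat.cast_ne_zero.mpr Fintype.card_ne_zero)
  · simp

theorem norm_inner_vec {ψ : AddChar R ℂ} (hψ : ψ.IsPrimitive) {r r' : R}
    (hr : IsUnit (2 * (r' - r))) (k k' : R) :
    ‖inner ℂ (vec ψ r k) (vec ψ r' k')‖ = 1 / √(Fintype.card R) := by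
  have hS : ‖∑ l, ψ ((r' - r) * l ^ 2 + (k' - k) * l)‖ = √(Fintype.card R) := by
    rw [← AddChar.norm_sum_quadratic_sq hψ hr, Real.sqrt_sq (norm_nonneg _)]
  have hn : (0 : ℝ) < Fintype.card R := Nat.cast_pos.mpr Fintype.card_pos
  rw [inner_vec, norm_mul, hS, norm_inv, Complex.norm_natCast]
  field_simp
  exact Real.sq_sqrt hn.le

end QuadraticPhase

/-- For an odd prime `p`, the `p` bases `(v r k) l = (1/√p) e^{(2πi/p)(r l² + k l)}`
(indices in `𝔽_p = ZMod p`), together with the standard basis, form `p + 1`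
mutually unbiased bases of `ℂ^p`. -/
theorem wootters_fields_odd_prime (p : ℕ) [NeZero p] (hp : p.Prime) (hodd : Odd p)
    (v : ZMod p → ZMod p → EuclideanSpace ℂ (ZMod p))
    (hv : ∀ r k l : ZMod p,
      v r k l = (1 / Real.sqrt p : ℝ) *
        Complex.exp (2 * π * Complex.I * ((r * l ^ 2 + k * l).val : ℕ) / p)) :
    (∀ r : ZMod p, Orthonormal ℂ (v r)) ∧
    (∀ r k l : ZMod p, ‖v r k l‖ = 1 / Real.sqrt p) ∧
    (∀ r r' : ZMod p, r ≠ r' → ∀ k k' : ZMod p,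
      ‖(inner ℂ (v r k) (v r' k') : ℂ)‖ = 1 / Real.sqrt p) := by
  have := Fact.mk hp
  have hψ := ZMod.isPrimitive_stdAddChar p
  have hv' : v = QuadraticPhase.vec ZMod.stdAddChar := by
    funext r k
    ext l
    simp [hv, QuadraticPhase.vec_apply, ZMod.stdAddChar_apply, ZMod.toCircle_apply]
  have h2 : (2 : ZMod p) ≠ 0 :=
    Ring.two_ne_zero ((ZMod.ringChar_zmod_n p).trans_ne (hodd.ne_two_of_dvd_nat dvd_rfl))
  subst hv'
  refine ⟨QuadraticPhase.orthonormal_vec hψ, ?_, fun r r' hr k k' => ?_⟩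
  · simpa using QuadraticPhase.norm_vec_apply ZMod.stdAddChar
  · simpa using QuadraticPhase.norm_inner_vec hψ
      (mul_ne_zero h2 (sub_ne_zero.mpr hr.symm)).isUnit k k'
end

section
/- Let R = R₁ × R₂ be a product of rings with unity, N ⊆ R a two-sided nilpotent ideal, and S ⊆ R a multiplicatively closed transversal to N (i.e., S contains exactly one element of each additive coset of N, and S·S ⊆ S). Then (1₁, 0) ∈ S and (0, 1₂) ∈ S and (0,0) ∈ S. -/
/-!
If `e` is a central idempotent and `s ∈ S` represents its coset, then `s * s` lies in `S` and
represents the same coset, so `s` is idempotent. Two commuting idempotents differing by a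
nilpotent element coincide, hence `s = e`. The elements `(1, 0)`, `(0, 1)` and `0` of
`R₁ × R₂` are central idempotents.
-/

section Transversal

variable {R : Type*} [Ring R] {N S : Set R}

theorem isIdempotentElem_of_mem_transversal
    (hNadd : ∀ x ∈ N, ∀ y ∈ N, x + y ∈ N)
    (hNmul : ∀ x ∈ N, ∀ r : R, r * x ∈ N ∧ x * r ∈ N)
    (hStrans : ∀ r : R, ∃! s, s ∈ S ∧ s - r ∈ N)
    (hSmul : ∀ x ∈ S, ∀ y ∈ S, x * y ∈ S)
    {e s : R} (he : IsIdempotentElem e) (hs : s ∈ S) (hse : s - e ∈ N) :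
    IsIdempotentElem s := by
  have hsse : s * s - e ∈ N := by
    have hsum : s * (s - e) + (s - e) * e = s * s - e := by
      rw [mul_sub, sub_mul, he.eq]; abel
    rw [← hsum]
    exact hNadd _ (hNmul _ hse s).1 _ (hNmul _ hse e).2
  exact (hStrans e).unique ⟨hSmul s hs s hs, hsse⟩ ⟨hs, hse⟩

theorem mem_transversal_of_isIdempotentElem_of_mem_center
    (hNadd : ∀ x ∈ N, ∀ y ∈ N, x + y ∈ N)
    (hNmul : ∀ x ∈ N, ∀ r : R, r * x ∈ N ∧ x * r ∈ N)
    (hNnil : ∀ x ∈ N, IsNilpotent x)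
    (hStrans : ∀ r : R, ∃! s, s ∈ S ∧ s - r ∈ N)
    (hSmul : ∀ x ∈ S, ∀ y ∈ S, x * y ∈ S)
    {e : R} (he : IsIdempotentElem e) (he_center : e ∈ Set.center R) : e ∈ S := by
  obtain ⟨s, ⟨hs, hse⟩, -⟩ := hStrans e
  have hs_idem := isIdempotentElem_of_mem_transversal hNadd hNmul hStrans hSmul he hs hse
  have hcomm : Commute s e := Semigroup.mem_center_iff.mp he_center s
  rwa [← eq_of_isNilpotent_sub_of_isIdempotentElem_of_commute hs_idem he (hNnil _ hse) hcomm]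

end Transversal

theorem transversal_contains_idempotents_general {R₁ R₂ : Type*} [Ring R₁] [Ring R₂]
    (N : Set (R₁ × R₂))
    (hNadd : ∀ x ∈ N, ∀ y ∈ N, x + y ∈ N)
    (hNmul : ∀ x ∈ N, ∀ r : R₁ × R₂, r * x ∈ N ∧ x * r ∈ N)
    (hNnil : ∀ x ∈ N, ∃ t : ℕ, 0 < t ∧ x ^ t = 0)
    (S : Set (R₁ × R₂))
    (hStrans : ∀ r : R₁ × R₂, ∃! s, s ∈ S ∧ s - r ∈ N)
    (hSmul : ∀ x ∈ S, ∀ y ∈ S, x * y ∈ S) :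
    (((1 : R₁), (0 : R₂)) ∈ S) ∧ (((0 : R₁), (1 : R₂)) ∈ S) ∧
    ((0 : R₁ × R₂) ∈ S) := by
  have hNnil' : ∀ x ∈ N, IsNilpotent x := fun x hx ↦
    let ⟨t, _, ht⟩ := hNnil x hx; ⟨t, ht⟩
  have mem : ∀ e : R₁ × R₂, IsIdempotentElem e → e ∈ Set.center (R₁ × R₂) → e ∈ S :=
    fun _ ↦ mem_transversal_of_isIdempotentElem_of_mem_center hNadd hNmul hNnil' hStrans hSmul
  refine ⟨mem _ ?_ ?_, mem _ ?_ ?_, mem 0 .zero Set.zero_mem_center⟩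
  · exact Prod.ext (mul_one (1 : R₁)) (mul_zero (0 : R₂))
  · rw [Set.center_prod]; exact ⟨Set.one_mem_center, Set.zero_mem_center⟩
  · exact Prod.ext (mul_zero (0 : R₁)) (mul_one (1 : R₂))
  · rw [Set.center_prod]; exact ⟨Set.zero_mem_center, Set.one_mem_center⟩

/-- In a product `R = R₁ × R₂` of rings with unity, any multiplicatively closed
transversal `S` to a nilpotent two-sided ideal `N` contains `(1,0)`, `(0,1)`
and `(0,0)`. -/
theorem transversal_contains_idempotents {R₁ R₂ : Type*} [Ring R₁] [Ring R₂]
    (N : Set (R₁ × R₂))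
    (hN0 : (0 : R₁ × R₂) ∈ N)
    (hNadd : ∀ x ∈ N, ∀ y ∈ N, x + y ∈ N)
    (hNneg : ∀ x ∈ N, -x ∈ N)
    (hNmul : ∀ x ∈ N, ∀ r : R₁ × R₂, r * x ∈ N ∧ x * r ∈ N)
    (hNnil : ∀ x ∈ N, ∃ t : ℕ, 0 < t ∧ x ^ t = 0)
    (S : Set (R₁ × R₂))
    (hStrans : ∀ r : R₁ × R₂, ∃! s, s ∈ S ∧ s - r ∈ N)
    (hSmul : ∀ x ∈ S, ∀ y ∈ S, x * y ∈ S) :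
    (((1 : R₁), (0 : R₂)) ∈ S) ∧ (((0 : R₁), (1 : R₂)) ∈ S) ∧
    ((0 : R₁ × R₂) ∈ S) :=
  transversal_contains_idempotents_general N hNadd hNmul hNnil S hStrans hSmul
end

section
/- Let R = R₁ × R₂ be a product of rings with unity, N a nilpotent two-sided ideal of R, and S a multiplicatively closed transversal to N. Then S = (S ∩ R₁) ⊕ (S ∩ R₂), i.e., (s₁, s₂) ∈ S if and only if (s₁, 0) ∈ S and (0, s₂) ∈ S; moreover each S ∩ R_i is multiplicatively closed and is a transversal to N ∩ R_i in R_i, and contains at least two elements. -/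
/-!
An element of `S` congruent modulo `N` to a central idempotent `j` is itself idempotent (its
square lies in `S` and is congruent to `j² = j`), and two commuting idempotents whose difference
is nilpotent coincide. Hence `S` contains every central idempotent of `R`, in particular
`0`, `(1, 0)` and `(0, 1)`. Multiplying by these shows that `S` is closed under the two
projections, and comparing the projections of the representative of `(s₁, s₂)` with `(s₁, 0)`
and `(0, s₂)` gives the splitting.
-/

namespace TwoSidedIdeal

variable {R : Type*} [Ring R]

def IsTransversal (I : TwoSidedIdeal R) (S : Set R) : Prop :=
  ∀ r : R, ∃! s, s ∈ S ∧ s - r ∈ I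

namespace IsTransversal

variable {I : TwoSidedIdeal R} {S : Set R}

theorem eq_of_sub_mem (hS : I.IsTransversal S) {a b : R} (ha : a ∈ S) (hb : b ∈ S)
    (hab : a - b ∈ I) : a = b :=
  (hS b).unique ⟨ha, hab⟩ ⟨hb, by rw [sub_self]; exact I.zero_mem⟩

theorem isIdempotentElem_of_sub_mem (hS : I.IsTransversal S)
    (hSmul : ∀ x ∈ S, ∀ y ∈ S, x * y ∈ S) {e j : R} (hj : IsIdempotentElem j) (he : e ∈ S)
    (hej : e - j ∈ I) : IsIdempotentElem e := by
  refine hS.eq_of_sub_mem (hSmul e he e he) he ?_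
  have hsq : e * e - e = e * (e - j) + (e - j) * j - (e - j) := by
    rw [mul_sub, sub_mul, hj.eq]; abel
  rw [hsq]
  exact I.sub_mem (I.add_mem (I.mul_mem_left _ _ hej) (I.mul_mem_right _ _ hej)) hej

theorem mem_of_isIdempotentElem_of_mem_center (hS : I.IsTransversal S)
    (hSmul : ∀ x ∈ S, ∀ y ∈ S, x * y ∈ S) (hnil : ∀ x ∈ I, IsNilpotent x) {j : R}
    (hj : IsIdempotentElem j) (hj_center : j ∈ Set.center R) : j ∈ S := by
  obtain ⟨e, ⟨he, hej⟩, -⟩ := hS j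
  have hej_eq : e = j :=
    eq_of_isNilpotent_sub_of_isIdempotentElem_of_commute
      (hS.isIdempotentElem_of_sub_mem hSmul hj he hej) hj (hnil _ hej)
      ((Set.mem_center_iff.mp hj_center).comm e).symm
  exact hej_eq ▸ he

theorem zero_mem (hS : I.IsTransversal S) (hSmul : ∀ x ∈ S, ∀ y ∈ S, x * y ∈ S)
    (hnil : ∀ x ∈ I, IsNilpotent x) : (0 : R) ∈ S :=
  hS.mem_of_isIdempotentElem_of_mem_center hSmul hnil .zero Set.zero_mem_center

theorem mem_of_mul_mem_of_add_eq_one (hS : I.IsTransversal S)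
    (hSmul : ∀ x ∈ S, ∀ y ∈ S, x * y ∈ S) {e f x : R} (he : e ∈ S) (hf : f ∈ S)
    (hef : e + f = 1) (hxe : x * e ∈ S) (hxf : x * f ∈ S) : x ∈ S := by
  obtain ⟨s, ⟨hs, hsx⟩, -⟩ := hS x
  have hmul_eq : ∀ g ∈ S, x * g ∈ S → s * g = x * g := fun g hg hxg =>
    hS.eq_of_sub_mem (hSmul s hs g hg) hxg (by rw [← sub_mul]; exact I.mul_mem_right _ _ hsx)
  have hsx_eq : s = x := by
    rw [← mul_one s, ← mul_one x, ← hef, mul_add, mul_add, hmul_eq e he hxe, hmul_eq f hf hxf]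
  exact hsx_eq ▸ hs

section Prod

variable {R₁ R₂ : Type*} [Ring R₁] [Ring R₂] {I : TwoSidedIdeal (R₁ × R₂)} {S : Set (R₁ × R₂)}

theorem one_zero_mem (hS : I.IsTransversal S) (hSmul : ∀ x ∈ S, ∀ y ∈ S, x * y ∈ S)
    (hnil : ∀ x ∈ I, IsNilpotent x) : ((1 : R₁), (0 : R₂)) ∈ S :=
  hS.mem_of_isIdempotentElem_of_mem_center hSmul hnil (by ext <;> simp)
    (Semigroup.mem_center_iff.mpr fun _ => by ext <;> simp)

theorem zero_one_mem (hS : I.IsTransversal S) (hSmul : ∀ x ∈ S, ∀ y ∈ S, x * y ∈ S)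
    (hnil : ∀ x ∈ I, IsNilpotent x) : ((0 : R₁), (1 : R₂)) ∈ S :=
  hS.mem_of_isIdempotentElem_of_mem_center hSmul hnil (by ext <;> simp)
    (Semigroup.mem_center_iff.mpr fun _ => by ext <;> simp)

theorem mk_mem_iff (hS : I.IsTransversal S) (hSmul : ∀ x ∈ S, ∀ y ∈ S, x * y ∈ S)
    (hnil : ∀ x ∈ I, IsNilpotent x) (s₁ : R₁) (s₂ : R₂) :
    (s₁, s₂) ∈ S ↔ (s₁, (0 : R₂)) ∈ S ∧ ((0 : R₁), s₂) ∈ S := by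
  have h10 := hS.one_zero_mem hSmul hnil
  have h01 := hS.zero_one_mem hSmul hnil
  constructor
  · intro hs
    exact ⟨by simpa using hSmul _ hs _ h10, by simpa using hSmul _ hs _ h01⟩
  · rintro ⟨hs₁, hs₂⟩
    exact hS.mem_of_mul_mem_of_add_eq_one hSmul h10 h01 (by ext <;> simp)
      (by simpa using hs₁) (by simpa using hs₂)

theorem existsUnique_fst (hS : I.IsTransversal S) (hSmul : ∀ x ∈ S, ∀ y ∈ S, x * y ∈ S)
    (hnil : ∀ x ∈ I, IsNilpotent x) (r₁ : R₁) :
    ∃! a : R₁, (a, (0 : R₂)) ∈ S ∧ (a - r₁, (0 : R₂)) ∈ I := by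
  obtain ⟨⟨s₁, s₂⟩, ⟨hs, hsr⟩, huniq⟩ := hS (r₁, 0)
  have hs₁ : (s₁, (0 : R₂)) ∈ S := by simpa using hSmul _ hs _ (hS.one_zero_mem hSmul hnil)
  have hs₁r : (s₁ - r₁, (0 : R₂)) ∈ I := by simpa using I.mul_mem_right _ (1, 0) hsr
  have hs_eq : (s₁, (0 : R₂)) = (s₁, s₂) := huniq _ ⟨hs₁, by simpa using hs₁r⟩
  refine ⟨s₁, ⟨hs₁, hs₁r⟩, fun a ⟨ha, har⟩ => ?_⟩
  simpa using (huniq _ ⟨ha, by simpa using har⟩).trans hs_eq.symm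

theorem existsUnique_snd (hS : I.IsTransversal S) (hSmul : ∀ x ∈ S, ∀ y ∈ S, x * y ∈ S)
    (hnil : ∀ x ∈ I, IsNilpotent x) (r₂ : R₂) :
    ∃! b : R₂, ((0 : R₁), b) ∈ S ∧ ((0 : R₁), b - r₂) ∈ I := by
  obtain ⟨⟨s₁, s₂⟩, ⟨hs, hsr⟩, huniq⟩ := hS (0, r₂)
  have hs₂ : ((0 : R₁), s₂) ∈ S := by simpa using hSmul _ hs _ (hS.zero_one_mem hSmul hnil)
  have hs₂r : ((0 : R₁), s₂ - r₂) ∈ I := by simpa using I.mul_mem_right _ (0, 1) hsr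
  have hs_eq : ((0 : R₁), s₂) = (s₁, s₂) := huniq _ ⟨hs₂, by simpa using hs₂r⟩
  refine ⟨s₂, ⟨hs₂, hs₂r⟩, fun b ⟨hb, hbr⟩ => ?_⟩
  simpa using (huniq _ ⟨hb, by simpa using hbr⟩).trans hs_eq.symm

end Prod

end IsTransversal

end TwoSidedIdeal

/-- In a product `R = R₁ × R₂` of nonzero rings with unity, a multiplicatively
closed transversal `S` to a nilpotent two-sided ideal `N` splits:
`S = (S ∩ R₁) ⊕ (S ∩ R₂)`; each `S ∩ Rᵢ` is multiplicatively closed, is a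
transversal to `N ∩ Rᵢ` in `Rᵢ`, and has at least two elements. -/
theorem transversal_splits {R₁ R₂ : Type*} [Ring R₁] [Ring R₂]
    [Nontrivial R₁] [Nontrivial R₂]
    (N : Set (R₁ × R₂))
    (hN0 : (0 : R₁ × R₂) ∈ N)
    (hNadd : ∀ x ∈ N, ∀ y ∈ N, x + y ∈ N)
    (hNneg : ∀ x ∈ N, -x ∈ N)
    (hNmul : ∀ x ∈ N, ∀ r : R₁ × R₂, r * x ∈ N ∧ x * r ∈ N)
    (hNnil : ∀ x ∈ N, ∃ t : ℕ, 0 < t ∧ x ^ t = 0)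
    (S : Set (R₁ × R₂))
    (hStrans : ∀ r : R₁ × R₂, ∃! s, s ∈ S ∧ s - r ∈ N)
    (hSmul : ∀ x ∈ S, ∀ y ∈ S, x * y ∈ S) :
    -- splitting
    (∀ s₁ : R₁, ∀ s₂ : R₂, (s₁, s₂) ∈ S ↔
      ((s₁, (0 : R₂)) ∈ S ∧ (((0 : R₁), s₂)) ∈ S)) ∧
    -- S ∩ R₁ is multiplicatively closed and a transversal to N ∩ R₁
    (∀ a b : R₁, (a, (0 : R₂)) ∈ S → (b, (0 : R₂)) ∈ S →
      (a * b, (0 : R₂)) ∈ S) ∧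
    (∀ r₁ : R₁, ∃! a : R₁, (a, (0 : R₂)) ∈ S ∧ (a - r₁, (0 : R₂)) ∈ N) ∧
    -- S ∩ R₂ is multiplicatively closed and a transversal to N ∩ R₂
    (∀ a b : R₂, ((0 : R₁), a) ∈ S → ((0 : R₁), b) ∈ S →
      (((0 : R₁), a * b)) ∈ S) ∧
    (∀ r₂ : R₂, ∃! b : R₂, (((0 : R₁), b)) ∈ S ∧ (((0 : R₁), b - r₂)) ∈ N) ∧
    -- each part has at least two elements
    (∃ a b : R₁, a ≠ b ∧ (a, (0 : R₂)) ∈ S ∧ (b, (0 : R₂)) ∈ S) ∧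
    (∃ a b : R₂, a ≠ b ∧ (((0 : R₁), a)) ∈ S ∧ (((0 : R₁), b)) ∈ S) := by
  let I : TwoSidedIdeal (R₁ × R₂) := .mk' N hN0 (hNadd _ · _ ·) (hNneg _ ·)
    (fun hy => (hNmul _ hy _).1) (fun hx => (hNmul _ hx _).2)
  have hS : I.IsTransversal S := by simpa [TwoSidedIdeal.IsTransversal, I] using hStrans
  have hnil : ∀ x ∈ I, IsNilpotent x := fun x hx =>
    let ⟨t, _, ht⟩ := hNnil x (by simpa [I] using hx); ⟨t, ht⟩
  have h0 := hS.zero_mem hSmul hnil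
  refine ⟨hS.mk_mem_iff hSmul hnil, fun a b ha hb => by simpa using hSmul _ ha _ hb,
    by simpa [I] using hS.existsUnique_fst hSmul hnil,
    fun a b ha hb => by simpa using hSmul _ ha _ hb,
    by simpa [I] using hS.existsUnique_snd hSmul hnil,
    ⟨0, 1, zero_ne_one, h0, hS.one_zero_mem hSmul hnil⟩,
    ⟨0, 1, zero_ne_one, h0, hS.zero_one_mem hSmul hnil⟩⟩
end

section
/- Let R be a finite ring with unity, S ⊆ R multiplicatively closed and a transversal to a nilpotent ideal N of R. If |S| = d₁·d₂ with d₁, d₂ ≥ 2 coprime, then R decomposes as a direct sum R₁ ⊕ R₂ of rings with unity such that |S ∩ R₁| = d₁ and |S ∩ R₂| = d₂. -/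
/-!
Some power `f = d₁ ^ k` of `d₁ • 1` is a central idempotent. A power of `d₁` kills
`R₁ = (1 - f) R`, while `d₁` acts injectively on `R₂ = f R`, so `|R₁|` is prime to `d₂`
and `|R₂|` is prime to `d₁`.

Choosing for each `r` the element of `S` congruent to `r` modulo `N` gives a multiplicative
retraction `R → S`. It fixes every central idempotent, since commuting idempotents that
differ by a nilpotent are equal. Hence `s ↦ ((1 - f) s, f s)` is a bijection
`S ≃ (S ∩ R₁) × (S ∩ R₂)`, and `S ∩ Rᵢ` is a transversal of `N ∩ Rᵢ` in `Rᵢ`, so `|S ∩ Rᵢ|`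
divides `|Rᵢ|`. Now `|S ∩ R₁| |S ∩ R₂| = d₁ d₂` with `|S ∩ R₁|` prime to `d₂` and
`|S ∩ R₂|` prime to `d₁` forces `|S ∩ R₁| = d₁` and `|S ∩ R₂| = d₂`.
-/

theorem exists_pos_isIdempotentElem_pow {M : Type*} [Monoid M] [Finite M] (a : M) :
    ∃ k, 0 < k ∧ IsIdempotentElem (a ^ k) := by
  obtain ⟨i, j, hne, hij⟩ := Finite.exists_ne_map_eq_of_infinite (a ^ · : ℕ → M)
  wlog hlt : i < j generalizing i j
  · exact this j i hne.symm hij.symm (by omega)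
  obtain ⟨p, hp, rfl⟩ : ∃ p, 0 < p ∧ j = i + p := ⟨j - i, by omega, by omega⟩
  have periodic (m q : ℕ) : a ^ (i + m + p * q) = a ^ (i + m) := by
    induction q with
    | zero => simp
    | succ q ih =>
      calc a ^ (i + m + p * (q + 1)) = a ^ (i + p) * a ^ (m + p * q) := by
            rw [← pow_add]; ring_nf
        _ = a ^ (i + m + p * q) := by rw [← hij, ← pow_add, add_assoc]
        _ = a ^ (i + m) := ih
  obtain ⟨m, hm⟩ := Nat.exists_eq_add_of_le (show i ≤ p * (i + 1) by nlinarith)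
  -- `p * (i + 1)` is a multiple of the period `p` beyond the preperiod `i`
  refine ⟨p * (i + 1), by positivity, ?_⟩
  rw [IsIdempotentElem, ← pow_add]
  simpa only [← hm] using periodic m (i + 1)

theorem Nat.eq_of_mul_eq_mul_of_coprime {a b c d : ℕ} (h : a * b = c * d)
    (had : a.Coprime d) (hbc : b.Coprime c) : a = c :=
  Nat.dvd_antisymm (had.dvd_of_dvd_mul_right (h ▸ dvd_mul_right a b))
    (hbc.symm.dvd_of_dvd_mul_right (h ▸ dvd_mul_right c d))

theorem coprime_card_of_nsmul_eq_zero_imp_eq_zero {G : Type*} [AddGroup G] [Finite G] {n : ℕ}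
    (h : ∀ x : G, n • x = 0 → x = 0) : (Nat.card G).Coprime n := by
  refine Nat.coprime_of_dvd fun p hp hpG hpn ↦ ?_
  have : Fact p.Prime := ⟨hp⟩
  obtain ⟨x, hx⟩ := exists_prime_addOrderOf_dvd_card' p hpG
  have hx0 : x = 0 := h x (addOrderOf_dvd_iff_nsmul_eq_zero.1 (hx ▸ hpn))
  rw [hx0, addOrderOf_zero] at hx
  exact hp.one_lt.ne hx

namespace AddSubgroup

variable {R : Type*} [Ring R] {e : R}

abbrev corner (e : R) : AddSubgroup R :=
  (NonUnitalRing.corner e).toAddSubgroup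

theorem mem_corner_iff (he : IsIdempotentElem e) (hc : e ∈ Subring.center R) {x : R} :
    x ∈ corner e ↔ e * x = x :=
  Subsemigroup.mem_corner_iff_mul_left he hc

theorem mem_corner_one_sub_iff (he : IsIdempotentElem e) (hc : e ∈ Subring.center R)
    {x : R} :
    x ∈ corner (1 - e) ↔ e * x = 0 := by
  rw [mem_corner_iff he.one_sub (sub_mem (one_mem _) hc), sub_mul, one_mul, sub_eq_self]

theorem mul_mem_corner (he : IsIdempotentElem e) (hc : e ∈ Subring.center R) (r : R) :
    ∀ x ∈ corner e, r * x ∈ corner e ∧ x * r ∈ corner e := by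
  simp only [mem_corner_iff he hc]
  intro x hx
  rw [← mul_assoc, ← mul_assoc, ← Subring.mem_center_iff.1 hc r, mul_assoc, hx]
  exact ⟨rfl, rfl⟩

theorem exists_identity_mem_corner (he : IsIdempotentElem e) (hc : e ∈ Subring.center R) :
    ∃ u ∈ corner e, ∀ x ∈ corner e, u * x = x ∧ x * u = x := by
  simp only [mem_corner_iff he hc]
  exact ⟨e, he.eq, fun x hx ↦ ⟨hx, Subring.mem_center_iff.1 hc x ▸ hx⟩⟩

theorem isCompl_corner_one_sub (he : IsIdempotentElem e) (hc : e ∈ Subring.center R) :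
    IsCompl (corner e) (corner (1 - e)) := by
  constructor
  · rw [disjoint_def]
    intro x hx hx'
    rw [← (mem_corner_iff he hc).1 hx, (mem_corner_one_sub_iff he hc).1 hx']
  · rw [codisjoint_iff, eq_top_iff]
    intro x _
    rw [mem_sup]
    refine ⟨e * x, ?_, (1 - e) * x, ?_, by noncomm_ring⟩
    · rw [mem_corner_iff he hc, ← mul_assoc, he.eq]
    · rw [mem_corner_one_sub_iff he hc, ← mul_assoc, mul_sub, mul_one, he.eq,
        sub_self, zero_mul]

end AddSubgroup

section Transversal

open AddSubgroup

variable {R : Type*} [Ring R]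

def IsTransversal (I : TwoSidedIdeal R) (S : Set R) : Prop :=
  ∀ r, ∃! s, s ∈ S ∧ s - r ∈ I

namespace IsTransversal

variable {I : TwoSidedIdeal R} {S : Set R}

noncomputable def rep (hS : IsTransversal I S) (r : R) : R :=
  (hS r).exists.choose

theorem rep_mem (hS : IsTransversal I S) (r : R) : hS.rep r ∈ S :=
  (hS r).exists.choose_spec.1

theorem rep_sub_mem (hS : IsTransversal I S) (r : R) : hS.rep r - r ∈ I :=
  (hS r).exists.choose_spec.2

theorem rep_eq (hS : IsTransversal I S) {r s : R} (hs : s ∈ S) (hsr : s - r ∈ I) :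
    hS.rep r = s :=
  (hS r).unique ⟨hS.rep_mem r, hS.rep_sub_mem r⟩ ⟨hs, hsr⟩

theorem rep_of_mem (hS : IsTransversal I S) {s : R} (hs : s ∈ S) : hS.rep s = s :=
  hS.rep_eq hs (by simp)

theorem rep_mul (hS : IsTransversal I S) (hS_mul : ∀ x ∈ S, ∀ y ∈ S, x * y ∈ S)
    (x y : R) : hS.rep (x * y) = hS.rep x * hS.rep y := by
  refine hS.rep_eq (hS_mul _ (hS.rep_mem x) _ (hS.rep_mem y)) ?_
  rw [show hS.rep x * hS.rep y - x * y = hS.rep x * (hS.rep y - y) + (hS.rep x - x) * y by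
    noncomm_ring]
  exact I.add_mem (I.mul_mem_left _ _ (hS.rep_sub_mem y))
    (I.mul_mem_right _ _ (hS.rep_sub_mem x))

theorem rep_of_isIdempotentElem (hS : IsTransversal I S)
    (hS_mul : ∀ x ∈ S, ∀ y ∈ S, x * y ∈ S) (hI : ∀ x ∈ I, IsNilpotent x) {e : R}
    (he : IsIdempotentElem e) (hc : e ∈ Subring.center R) : hS.rep e = e :=
  eq_of_isNilpotent_sub_of_isIdempotentElem_of_commute
    (by rw [IsIdempotentElem, ← hS.rep_mul hS_mul, he.eq]) he (hI _ (hS.rep_sub_mem e))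
    (Subring.mem_center_iff.1 hc _)

theorem rep_mul_central (hS : IsTransversal I S)
    (hS_mul : ∀ x ∈ S, ∀ y ∈ S, x * y ∈ S) (hI : ∀ x ∈ I, IsNilpotent x) {e : R}
    (he : IsIdempotentElem e) (hc : e ∈ Subring.center R) (x : R) :
    hS.rep (e * x) = e * hS.rep x := by
  rw [hS.rep_mul hS_mul, hS.rep_of_isIdempotentElem hS_mul hI he hc]

theorem ncard_inter_dvd_card (hS : IsTransversal I S) (H : AddSubgroup R)
    (hH : ∀ x ∈ H, hS.rep x ∈ H) : (S ∩ H).ncard ∣ Nat.card H := by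
  let φ : H ≃ ↥(S ∩ H) × ↥((I : Set R) ∩ H) :=
    { toFun x := (⟨hS.rep x, hS.rep_mem x, hH x x.2⟩,
        ⟨hS.rep x - x, hS.rep_sub_mem x, H.sub_mem (hH x x.2) x.2⟩)
      invFun p := ⟨p.1 - p.2, H.sub_mem p.1.2.2 p.2.2.2⟩
      left_inv x := by ext; simp
      right_inv := by
        rintro ⟨⟨s, hsS, hsH⟩, ⟨n, hnI, hnH⟩⟩
        have hrep : hS.rep (s - n) = s := hS.rep_eq hsS (by simpa using hnI)
        ext <;> simp [hrep] }
  rw [Nat.card_congr φ, Nat.card_prod, Nat.card_coe_set_eq]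
  exact dvd_mul_right _ _

theorem ncard_inter_corner_dvd_card (hS : IsTransversal I S)
    (hS_mul : ∀ x ∈ S, ∀ y ∈ S, x * y ∈ S) (hI : ∀ x ∈ I, IsNilpotent x) {e : R}
    (he : IsIdempotentElem e) (hc : e ∈ Subring.center R) :
    (S ∩ corner e).ncard ∣ Nat.card (corner e) :=
  hS.ncard_inter_dvd_card _ fun x hx ↦ by
    rw [mem_corner_iff he hc] at hx ⊢
    rw [← hS.rep_mul_central hS_mul hI he hc, hx]

theorem add_mem_of_mem_corner (hS : IsTransversal I S)
    (hS_mul : ∀ x ∈ S, ∀ y ∈ S, x * y ∈ S) (hI : ∀ x ∈ I, IsNilpotent x) {e : R}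
    (he : IsIdempotentElem e) (hc : e ∈ Subring.center R) {a b : R} (ha : a ∈ S ∩ corner e)
    (hb : b ∈ S ∩ corner (1 - e)) : a + b ∈ S := by
  have hea : e * a = a := (mem_corner_iff he hc).1 ha.2
  have heb : e * b = 0 := (mem_corner_one_sub_iff he hc).1 hb.2
  have hrep : hS.rep (a + b) = a + b :=
    calc hS.rep (a + b) = e * hS.rep (a + b) + (1 - e) * hS.rep (a + b) := by noncomm_ring
      _ = hS.rep (e * (a + b)) + hS.rep ((1 - e) * (a + b)) := by
        rw [hS.rep_mul_central hS_mul hI he hc,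
          hS.rep_mul_central hS_mul hI he.one_sub (sub_mem (one_mem _) hc)]
      _ = a + b := by
        simp [mul_add, sub_mul, hea, heb, hS.rep_of_mem ha.1, hS.rep_of_mem hb.1]
  exact hrep ▸ hS.rep_mem _

theorem ncard_inter_corner_mul_ncard_inter_corner_one_sub (hS : IsTransversal I S)
    (hS_mul : ∀ x ∈ S, ∀ y ∈ S, x * y ∈ S) (hI : ∀ x ∈ I, IsNilpotent x) {e : R}
    (he : IsIdempotentElem e) (hc : e ∈ Subring.center R) :
    (S ∩ corner e).ncard * (S ∩ corner (1 - e)).ncard = S.ncard := by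
  have hc' : 1 - e ∈ Subring.center R := sub_mem (one_mem _) hc
  have heS : e ∈ S := hS.rep_of_isIdempotentElem hS_mul hI he hc ▸ hS.rep_mem e
  have heS' : 1 - e ∈ S := hS.rep_of_isIdempotentElem hS_mul hI he.one_sub hc' ▸ hS.rep_mem _
  let φ : S ≃ ↥(S ∩ corner e) × ↥(S ∩ corner (1 - e)) :=
    { toFun s := (⟨e * s, hS_mul _ heS _ s.2, (mem_corner_iff he hc).2 <| by
          rw [← mul_assoc, he.eq]⟩,
        ⟨(1 - e) * s, hS_mul _ heS' _ s.2, (mem_corner_iff he.one_sub hc').2 <| by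
          rw [← mul_assoc, he.one_sub.eq]⟩)
      invFun p := ⟨p.1 + p.2, hS.add_mem_of_mem_corner hS_mul hI he hc p.1.2 p.2.2⟩
      left_inv s := by ext; simp only; noncomm_ring
      right_inv := by
        rintro ⟨⟨a, haS, ha⟩, ⟨b, hbS, hb⟩⟩
        have hea : e * a = a := (mem_corner_iff he hc).1 ha
        have heb : e * b = 0 := (mem_corner_one_sub_iff he hc).1 hb
        ext
        · simp [mul_add, hea, heb]
        · simp [mul_add, sub_mul, hea, heb] }
  rw [← Nat.card_coe_set_eq S, Nat.card_congr φ, Nat.card_prod, Nat.card_coe_set_eq,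
    Nat.card_coe_set_eq]

end IsTransversal

end Transversal

section NatCastPow

open AddSubgroup

variable {R : Type*} [Ring R] [Finite R] {d k : ℕ}

theorem coprime_card_corner_natCast_pow (hk : 0 < k) (hf : IsIdempotentElem ((d : R) ^ k)) :
    (Nat.card (corner ((d : R) ^ k))).Coprime d := by
  refine coprime_card_of_nsmul_eq_zero_imp_eq_zero fun x hx ↦ ?_
  have hfx := (mem_corner_iff hf (pow_mem (natCast_mem _ d) k)).1 x.2
  have hdx : (d : R) * x = 0 := by simpa [nsmul_eq_mul] using congrArg Subtype.val hx
  ext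
  calc (x : R) = (d : R) ^ (k - 1) * (d * x) := by
        rw [← mul_assoc, ← pow_succ, Nat.sub_add_cancel hk, hfx]
    _ = 0 := by rw [hdx, mul_zero]

theorem coprime_card_corner_one_sub_natCast_pow {m : ℕ} (hf : IsIdempotentElem ((d : R) ^ k))
    (hdm : d.Coprime m) : (Nat.card (corner (1 - (d : R) ^ k))).Coprime m := by
  refine coprime_card_of_nsmul_eq_zero_imp_eq_zero fun x hx ↦ ?_
  have hfx := (mem_corner_one_sub_iff hf (pow_mem (natCast_mem _ d) k)).1 x.2
  have h₁ : addOrderOf x ∣ d ^ k :=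
    addOrderOf_dvd_iff_nsmul_eq_zero.2 (by ext; simpa [nsmul_eq_mul] using hfx)
  have h₂ : addOrderOf x ∣ m := addOrderOf_dvd_iff_nsmul_eq_zero.2 hx
  exact AddMonoid.addOrderOf_eq_one_iff.1 (Nat.eq_one_of_dvd_coprimes (hdm.pow_left k) h₁ h₂)

end NatCastPow

theorem transversal_card_splits_general {R : Type*} [Ring R] [Fintype R]
    (N : Set R)
    (hN0 : (0 : R) ∈ N)
    (hNadd : ∀ x ∈ N, ∀ y ∈ N, x + y ∈ N)
    (hNneg : ∀ x ∈ N, -x ∈ N)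
    (hNmul : ∀ x ∈ N, ∀ r : R, r * x ∈ N ∧ x * r ∈ N)
    (hNnil : ∀ x ∈ N, ∃ t : ℕ, 0 < t ∧ x ^ t = 0)
    (S : Set R)
    (hStrans : ∀ r : R, ∃! s, s ∈ S ∧ s - r ∈ N)
    (hSmul : ∀ x ∈ S, ∀ y ∈ S, x * y ∈ S)
    (d₁ d₂ : ℕ)
    (hcop : Nat.Coprime d₁ d₂)
    (hcard : S.ncard = d₁ * d₂) :
    ∃ R₁ R₂ : AddSubgroup R,
      (∀ r : R, ∀ x ∈ R₁, r * x ∈ R₁ ∧ x * r ∈ R₁) ∧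
      (∀ r : R, ∀ x ∈ R₂, r * x ∈ R₂ ∧ x * r ∈ R₂) ∧
      IsCompl R₁ R₂ ∧
      (∃ e₁ ∈ R₁, ∀ x ∈ R₁, e₁ * x = x ∧ x * e₁ = x) ∧
      (∃ e₂ ∈ R₂, ∀ x ∈ R₂, e₂ * x = x ∧ x * e₂ = x) ∧
      (S ∩ (R₁ : Set R)).ncard = d₁ ∧ (S ∩ (R₂ : Set R)).ncard = d₂ := by
  let I : TwoSidedIdeal R := .mk' N hN0 (hNadd _ · _ ·) (hNneg _ ·)
    (fun hy ↦ (hNmul _ hy _).1) (fun hx ↦ (hNmul _ hx _).2)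
  have hS : IsTransversal I S := by
    simpa only [IsTransversal, I, TwoSidedIdeal.mem_mk'] using hStrans
  have hI : ∀ x ∈ I, IsNilpotent x := fun x hx ↦
    let ⟨t, _, ht⟩ := hNnil x ((TwoSidedIdeal.mem_mk' ..).1 hx)
    ⟨t, ht⟩
  obtain ⟨k, hk, hf⟩ := exists_pos_isIdempotentElem_pow (d₁ : R)
  set f := (d₁ : R) ^ k
  have hfc : f ∈ Subring.center R := pow_mem (natCast_mem _ d₁) k
  have hfc' : 1 - f ∈ Subring.center R := sub_mem (one_mem _) hfc
  let R₁ := AddSubgroup.corner (1 - f)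
  let R₂ := AddSubgroup.corner f
  have hcop₁ : (S ∩ (R₁ : Set R)).ncard.Coprime d₂ :=
    (coprime_card_corner_one_sub_natCast_pow hf hcop).coprime_dvd_left
      (hS.ncard_inter_corner_dvd_card hSmul hI hf.one_sub hfc')
  have hcop₂ : (S ∩ (R₂ : Set R)).ncard.Coprime d₁ :=
    (coprime_card_corner_natCast_pow hk hf).coprime_dvd_left
      (hS.ncard_inter_corner_dvd_card hSmul hI hf hfc)
  have hprod : (S ∩ (R₁ : Set R)).ncard * (S ∩ (R₂ : Set R)).ncard = d₁ * d₂ := by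
    rw [mul_comm, hS.ncard_inter_corner_mul_ncard_inter_corner_one_sub hSmul hI hf hfc, hcard]
  exact ⟨R₁, R₂, AddSubgroup.mul_mem_corner hf.one_sub hfc', AddSubgroup.mul_mem_corner hf hfc,
    (AddSubgroup.isCompl_corner_one_sub hf hfc).symm,
    AddSubgroup.exists_identity_mem_corner hf.one_sub hfc',
    AddSubgroup.exists_identity_mem_corner hf hfc,
    Nat.eq_of_mul_eq_mul_of_coprime hprod hcop₁ hcop₂,
    Nat.eq_of_mul_eq_mul_of_coprime (by rw [mul_comm, hprod, mul_comm]) hcop₂ hcop₁⟩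

/-- Let `R` be a finite ring with unity, `S ⊆ R` multiplicatively closed and a
transversal to a nilpotent ideal `N`. If `|S| = d₁·d₂` with `d₁, d₂ ≥ 2`
coprime, then `R = R₁ ⊕ R₂` is a direct sum of two-sided ideals, each a ring
with its own unity, with `|S ∩ R₁| = d₁` and `|S ∩ R₂| = d₂`. -/
theorem transversal_card_splits {R : Type*} [Ring R] [Fintype R]
    (N : Set R)
    (hN0 : (0 : R) ∈ N)
    (hNadd : ∀ x ∈ N, ∀ y ∈ N, x + y ∈ N)
    (hNneg : ∀ x ∈ N, -x ∈ N)
    (hNmul : ∀ x ∈ N, ∀ r : R, r * x ∈ N ∧ x * r ∈ N)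
    (hNnil : ∀ x ∈ N, ∃ t : ℕ, 0 < t ∧ x ^ t = 0)
    (S : Set R)
    (hStrans : ∀ r : R, ∃! s, s ∈ S ∧ s - r ∈ N)
    (hSmul : ∀ x ∈ S, ∀ y ∈ S, x * y ∈ S)
    (d₁ d₂ : ℕ) (hd₁ : 2 ≤ d₁) (hd₂ : 2 ≤ d₂)
    (hcop : Nat.Coprime d₁ d₂)
    (hcard : S.ncard = d₁ * d₂) :
    ∃ R₁ R₂ : AddSubgroup R,
      (∀ r : R, ∀ x ∈ R₁, r * x ∈ R₁ ∧ x * r ∈ R₁) ∧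
      (∀ r : R, ∀ x ∈ R₂, r * x ∈ R₂ ∧ x * r ∈ R₂) ∧
      IsCompl R₁ R₂ ∧
      (∃ e₁ ∈ R₁, ∀ x ∈ R₁, e₁ * x = x ∧ x * e₁ = x) ∧
      (∃ e₂ ∈ R₂, ∀ x ∈ R₂, e₂ * x = x ∧ x * e₂ = x) ∧
      (S ∩ (R₁ : Set R)).ncard = d₁ ∧ (S ∩ (R₂ : Set R)).ncard = d₂ :=
  transversal_card_splits_general N hN0 hNadd hNneg hNmul hNnil S hStrans hSmul d₁ d₂ hcop hcard
end

section
/- If there exist t mutually unbiased orthonormal bases in ℂ^{N₁} and t mutually unbiased orthonormal bases in ℂ^{N₂}, then there exist t mutually unbiased orthonormal bases in ℂ^{N₁·N₂}, obtained by tensoring the corresponding bases. -/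
namespace EuclideanSpace

variable {𝕜 : Type*} [RCLike 𝕜] {ι κ : Type*}

/-- The elementary tensor `x ⊗ y` under `𝕜^ι ⊗ 𝕜^κ ≅ 𝕜^(ι × κ)`. -/
def tensor (x : EuclideanSpace 𝕜 ι) (y : EuclideanSpace 𝕜 κ) : EuclideanSpace 𝕜 (ι × κ) :=
  WithLp.toLp 2 fun p => x p.1 * y p.2

@[simp]
theorem tensor_apply (x : EuclideanSpace 𝕜 ι) (y : EuclideanSpace 𝕜 κ) (p : ι × κ) :
    tensor x y p = x p.1 * y p.2 :=
  rfl

variable [Fintype ι] [Fintype κ]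

theorem inner_tensor_tensor (x x' : EuclideanSpace 𝕜 ι) (y y' : EuclideanSpace 𝕜 κ) :
    inner 𝕜 (tensor x y) (tensor x' y') = inner 𝕜 x x' * inner 𝕜 y y' := by
  simp only [PiLp.inner_apply, RCLike.inner_apply, tensor_apply, map_mul,
    Fintype.sum_prod_type, Finset.sum_mul_sum]
  exact Finset.sum_congr rfl fun _ _ => Finset.sum_congr rfl fun _ _ => by ring

theorem _root_.Orthonormal.tensor {α β : Type*} {u : α → EuclideanSpace 𝕜 ι}
    {w : β → EuclideanSpace 𝕜 κ} (hu : Orthonormal 𝕜 u) (hw : Orthonormal 𝕜 w) :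
    Orthonormal 𝕜 fun q : α × β => tensor (u q.1) (w q.2) := by
  classical
  rw [orthonormal_iff_ite] at hu hw ⊢
  intro q q'
  rw [inner_tensor_tensor, hu, hw, ite_zero_mul_ite_zero, one_mul]
  simp only [Prod.ext_iff]

end EuclideanSpace

/-- Given `t` mutually unbiased orthonormal bases of `ℂ^{N₁}` and `t` mutually
unbiased orthonormal bases of `ℂ^{N₂}`, tensoring corresponding bases yields
`t` mutually unbiased orthonormal bases of `ℂ^{N₁·N₂}`. -/
theorem mub_tensor_product (N₁ N₂ t : ℕ)
    (a : Fin t → Fin N₁ → EuclideanSpace ℂ (Fin N₁))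
    (b : Fin t → Fin N₂ → EuclideanSpace ℂ (Fin N₂))
    (ha : ∀ c, Orthonormal ℂ (a c))
    (hb : ∀ c, Orthonormal ℂ (b c))
    (hamub : ∀ c c' : Fin t, c ≠ c' → ∀ i k,
      ‖(inner ℂ (a c i) (a c' k) : ℂ)‖ = 1 / Real.sqrt N₁)
    (hbmub : ∀ c c' : Fin t, c ≠ c' → ∀ j l,
      ‖(inner ℂ (b c j) (b c' l) : ℂ)‖ = 1 / Real.sqrt N₂) :
    ∃ v : Fin t → (Fin N₁ × Fin N₂) → EuclideanSpace ℂ (Fin N₁ × Fin N₂),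
      (∀ c i j, ∀ p : Fin N₁ × Fin N₂, v c (i, j) p = a c i p.1 * b c j p.2) ∧
      (∀ c, Orthonormal ℂ (v c)) ∧
      (∀ c c' : Fin t, c ≠ c' → ∀ q q' : Fin N₁ × Fin N₂,
        ‖(inner ℂ (v c q) (v c' q') : ℂ)‖ = 1 / Real.sqrt (N₁ * N₂)) := by
  refine ⟨fun c q => EuclideanSpace.tensor (a c q.1) (b c q.2), fun _ _ _ _ => rfl,
    fun c => (ha c).tensor (hb c), fun c c' hcc' q q' => ?_⟩
  rw [EuclideanSpace.inner_tensor_tensor, norm_mul, hamub c c' hcc', hbmub c c' hcc',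
    Real.sqrt_mul (Nat.cast_nonneg _), one_div_mul_one_div]
end
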